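/- Let I be a finite set of items with a size function s : I → ℝ such that every item has a size in (1/4, 1]. Let P and Q be packings of I into bins of capacity 1 such that every nonempty bin of P has one of the types BL, BS, B, LLS, LL, SSS, and every nonempty bin of Q has one of the types BL, BS, B, LLS, LL, LSS, SSS. Assume P is BL-thorough (for all items b of class B and l of class L with s(b) + s(l) ≤ 1, the bin of b in P or the bin of l in P is of type BL), BS-thorough (for all items b of class B and x of class S with s(b) + s(x) ≤ 1, the bin of b in P has type BL or BS, or the bin of x in P has type BL or BS), and LLS-thorough (there do not exist two distinct bins of P, each of type LL or SSS, together with two items of class L and one item of class S all taken from these two bins whose total size is at most 1). Assume further that no bin of Q of type BS and no bin of Q of type B contains a B item that lies in a bin of type BL in P. Then N_P(BS) + N_P(LL) + 2 * N_Q(LSS) ≥ 3 * (N_P(SSS) - N_Q(SSS)). -/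

import Mathlib

open Classical

/-- The set of items that packing `P` assigns to bin `b`. -/
noncomputable def binOf {ι β : Type*} [Fintype ι] (P : ι → β) (b : β) : Finset ι :=
  Finset.univ.filter (fun i => P i = b)

/-- `P` is a valid packing into bins of capacity 1. -/
def IsPacking {ι β : Type*} [Fintype ι] (s : ι → ℝ) (P : ι → β) : Prop :=
  ∀ b : β, ∑ i ∈ binOf P b, s i ≤ 1

/-- A `B` (big) item has size in `(1/2, 1]`. -/
def isB {ι : Type*} (s : ι → ℝ) (i : ι) : Prop := 1 / 2 < s i ∧ s i ≤ 1

/-- An `L` (large) item has size in `(1/3, 1/2]`. -/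
def isL {ι : Type*} (s : ι → ℝ) (i : ι) : Prop := 1 / 3 < s i ∧ s i ≤ 1 / 2

/-- An `S` (small) item has size in `(1/4, 1/3]`. -/
def isS {ι : Type*} (s : ι → ℝ) (i : ι) : Prop := 1 / 4 < s i ∧ s i ≤ 1 / 3

/-- Bin `b` of packing `P` contains exactly `nb` items of class `B`, `nl` of class `L`,
`ns` of class `S` and nothing else. -/
noncomputable def BinHasType {ι β : Type*} [Fintype ι] (s : ι → ℝ) (P : ι → β) (b : β)
    (nb nl ns : ℕ) : Prop :=
  ((binOf P b).filter (fun i => isB s i)).card = nb ∧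
  ((binOf P b).filter (fun i => isL s i)).card = nl ∧
  ((binOf P b).filter (fun i => isS s i)).card = ns ∧
  (binOf P b).card = nb + nl + ns

/-- Number of bins of packing `P` containing exactly `nb` `B` items, `nl` `L` items and
`ns` `S` items (and nothing else). -/
noncomputable def numBins {ι β : Type*} [Fintype ι] [DecidableEq β] (s : ι → ℝ)
    (P : ι → β) (nb nl ns : ℕ) : ℕ :=
  ((Finset.univ.image P).filter (fun b => BinHasType s P b nb nl ns)).card

/-!
Count the S items and the L items in two ways, through `P` and through `Q`. Comparing the two
counts of S items reduces the claim to `N_Q(BS) + N_Q(LLS) ≤ 2 N_P(BS) + N_P(LLS) + N_P(LL)`.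
The normalization of `Q` sends the B item of every BL bin of `P` to a BL bin of `Q`, so
`N_P(BL) ≤ N_Q(BL)`, and then the two counts of L items give `N_Q(LLS) ≤ N_P(LLS) + N_P(LL)`.
Finally, BS-thoroughness puts one of the two items of every BS bin of `Q` into a BS bin of `P`,
whence `N_Q(BS) ≤ 2 N_P(BS)`.
-/

open Finset

section Counting

variable {ι β : Type*} [Fintype ι]

@[simp] lemma mem_binOf {R : ι → β} {b : β} {i : ι} : i ∈ binOf R b ↔ R i = b := by
  simp [binOf]

lemma card_filter_binOf_pos {R : ι → β} {p : ι → Prop} {i : ι} (hp : p i) :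
    0 < #((binOf R (R i)).filter p) :=
  card_pos.mpr ⟨i, by simp [hp]⟩

lemma BinHasType.triple_eq {s : ι → ℝ} {R : ι → β} {b : β} {nb nl ns nb' nl' ns' : ℕ}
    (h : BinHasType s R b nb nl ns) (h' : BinHasType s R b nb' nl' ns') :
    (nb, nl, ns) = (nb', nl', ns') := by
  obtain ⟨rfl, rfl, rfl, -⟩ := h
  obtain ⟨rfl, rfl, rfl, -⟩ := h'
  rfl

lemma BinHasType.exists_eq_pair {s : ι → ℝ} {R : ι → β} {q : β}
    (h : BinHasType s R q 1 0 1) :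
    ∃ b x, isB s b ∧ isS s x ∧ b ≠ x ∧ binOf R q = {b, x} := by
  obtain ⟨b, hb⟩ := card_eq_one.mp h.1
  obtain ⟨x, hx⟩ := card_eq_one.mp h.2.2.1
  have hbq : b ∈ (binOf R q).filter (isB s) := hb ▸ mem_singleton_self b
  have hxq : x ∈ (binOf R q).filter (isS s) := hx ▸ mem_singleton_self x
  rw [mem_filter] at hbq hxq
  have hne : b ≠ x := by
    rintro rfl
    linarith [hbq.2.1, hxq.2.2]
  refine ⟨b, x, hbq.2, hxq.2, hne, (eq_of_subset_of_card_le ?_ ?_).symm⟩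
  · exact insert_subset hbq.1 (singleton_subset_iff.mpr hxq.1)
  · rw [h.2.2.2, card_pair hne]

lemma card_filter_eq_sum_types (s : ι → ℝ) (R : ι → β) (p : ι → Prop) (T : Finset (ℕ × ℕ × ℕ))
    (hT : ∀ i, ∃ t ∈ T, BinHasType s R (R i) t.1 t.2.1 t.2.2) :
    #(univ.filter p) =
      ∑ t ∈ T, #(univ.filter fun i => p i ∧ BinHasType s R (R i) t.1 t.2.1 t.2.2) := by
  rw [← card_biUnion]
  · congr 1
    ext i
    simp only [mem_filter, mem_univ, true_and, mem_biUnion]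
    constructor
    · intro hp
      obtain ⟨t, ht, hi⟩ := hT i
      exact ⟨t, ht, hp, hi⟩
    · rintro ⟨-, -, hp, -⟩
      exact hp
  · intro t _ t' _ hne
    refine disjoint_left.mpr fun i hi hi' => hne ?_
    exact (mem_filter.mp hi).2.2.triple_eq (mem_filter.mp hi').2.2

variable [DecidableEq β]

lemma card_filter_and_binHasType (s : ι → ℝ) (R : ι → β) (p : ι → Prop) {nb nl ns k : ℕ}
    (hk : ∀ b, BinHasType s R b nb nl ns → #((binOf R b).filter p) = k) :
    #(univ.filter fun i => p i ∧ BinHasType s R (R i) nb nl ns) = k * numBins s R nb nl ns := by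
  rw [card_eq_sum_card_fiberwise (f := R)
    (t := (univ.image R).filter fun b => BinHasType s R b nb nl ns), numBins, mul_comm]
  · refine sum_const_nat fun b hb => ?_
    rw [← hk b (mem_filter.mp hb).2]
    congr 1
    ext i
    simp only [mem_filter, mem_univ, true_and, mem_binOf]
    constructor
    · rintro ⟨⟨hp, -⟩, rfl⟩
      exact ⟨rfl, hp⟩
    · rintro ⟨rfl, hp⟩
      exact ⟨⟨hp, (mem_filter.mp hb).2⟩, rfl⟩
  · intro i hi
    simp_all

lemma card_filter_eq_sum_mul_numBins (s : ι → ℝ) (R : ι → β) (p : ι → Prop)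
    (T : Finset (ℕ × ℕ × ℕ)) (k : ℕ × ℕ × ℕ → ℕ)
    (hT : ∀ i, ∃ t ∈ T, BinHasType s R (R i) t.1 t.2.1 t.2.2)
    (hk : ∀ t ∈ T, ∀ b, BinHasType s R b t.1 t.2.1 t.2.2 → #((binOf R b).filter p) = k t) :
    #(univ.filter p) = ∑ t ∈ T, k t * numBins s R t.1 t.2.1 t.2.2 :=
  (card_filter_eq_sum_types s R p T hT).trans
    (sum_congr rfl fun t ht => card_filter_and_binHasType s R p (hk t ht))

end Counting

section Comparison

variable {ι β γ : Type*} [Fintype ι] {s : ι → ℝ} {P : ι → β} {Q : ι → γ}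

lemma numBins_BL_le [DecidableEq β] [DecidableEq γ]
    (hQtypes : ∀ b : γ, (∃ i, Q i = b) →
      BinHasType s Q b 1 1 0 ∨ BinHasType s Q b 1 0 1 ∨ BinHasType s Q b 1 0 0 ∨
      BinHasType s Q b 0 2 1 ∨ BinHasType s Q b 0 2 0 ∨ BinHasType s Q b 0 1 2 ∨
      BinHasType s Q b 0 0 3)
    (hQnormBS : ∀ i, isB s i → BinHasType s P (P i) 1 1 0 → ¬ BinHasType s Q (Q i) 1 0 1)
    (hQnormB : ∀ i, isB s i → BinHasType s P (P i) 1 1 0 → ¬ BinHasType s Q (Q i) 1 0 0) :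
    numBins s P 1 1 0 ≤ numBins s Q 1 1 0 := by
  rw [← one_mul (numBins s P 1 1 0), ← one_mul (numBins s Q 1 1 0),
    ← card_filter_and_binHasType s P (isB s) fun _ h => h.1,
    ← card_filter_and_binHasType s Q (isB s) fun _ h => h.1]
  refine card_le_card fun i hi => ?_
  simp only [mem_filter, mem_univ, true_and] at hi ⊢
  obtain ⟨hB, hBL⟩ := hi
  refine ⟨hB, ?_⟩
  rcases hQtypes (Q i) ⟨i, rfl⟩ with h | h | h | h | h | h | h
  · exact h
  · exact absurd h (hQnormBS i hB hBL)
  · exact absurd h (hQnormB i hB hBL)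
  all_goals exact absurd h.1 (card_filter_binOf_pos hB).ne'

lemma exists_mem_of_binHasType_BS (hQ : IsPacking s Q)
    (hBSthorough : ∀ bi xi : ι, isB s bi → isS s xi → s bi + s xi ≤ 1 →
      (BinHasType s P (P bi) 1 1 0 ∨ BinHasType s P (P bi) 1 0 1) ∨
      (BinHasType s P (P xi) 1 1 0 ∨ BinHasType s P (P xi) 1 0 1))
    (hQnormBS : ∀ i, isB s i → BinHasType s P (P i) 1 1 0 → ¬ BinHasType s Q (Q i) 1 0 1)
    {q : γ} (hq : BinHasType s Q q 1 0 1) :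
    ∃ i, Q i = q ∧ BinHasType s P (P i) 1 0 1 := by
  obtain ⟨b, x, hb, hx, hne, hbin⟩ := hq.exists_eq_pair
  have hbq : Q b = q := mem_binOf.mp (hbin ▸ mem_insert_self b {x})
  have hxq : Q x = q := mem_binOf.mp (hbin ▸ mem_insert_of_mem (mem_singleton_self x))
  have hsum : s b + s x ≤ 1 := by simpa [hbin, sum_pair hne] using hQ q
  rcases hBSthorough b x hb hx hsum with (h | h) | (h | h)
  · exact absurd (hbq ▸ hq) (hQnormBS b hb h)
  · exact ⟨b, hbq, h⟩
  · exact absurd h.2.2.1 (card_filter_binOf_pos hx).ne'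
  · exact ⟨x, hxq, h⟩

lemma numBins_BS_le [DecidableEq β] [DecidableEq γ] (hQ : IsPacking s Q)
    (hBSthorough : ∀ bi xi : ι, isB s bi → isS s xi → s bi + s xi ≤ 1 →
      (BinHasType s P (P bi) 1 1 0 ∨ BinHasType s P (P bi) 1 0 1) ∨
      (BinHasType s P (P xi) 1 1 0 ∨ BinHasType s P (P xi) 1 0 1))
    (hQnormBS : ∀ i, isB s i → BinHasType s P (P i) 1 1 0 → ¬ BinHasType s Q (Q i) 1 0 1) :
    numBins s Q 1 0 1 ≤ 2 * numBins s P 1 0 1 :=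
  calc numBins s Q 1 0 1
      ≤ #(univ.filter fun i => BinHasType s P (P i) 1 0 1) := by
        refine card_le_card_of_surjOn Q fun q hq => ?_
        obtain ⟨i, hiq, hi⟩ :=
          exists_mem_of_binHasType_BS hQ hBSthorough hQnormBS (mem_filter.mp hq).2
        exact ⟨i, by simpa using hi, hiq⟩
    _ = 2 * numBins s P 1 0 1 := by
        simpa using card_filter_and_binHasType s P (fun _ => True) (k := 2)
          fun _ h => by simpa using h.2.2.2

end Comparison

theorem boundS_general {ι β γ : Type*} [Fintype ι] [DecidableEq β] [DecidableEq γ]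
    (s : ι → ℝ)
    (P : ι → β) (Q : ι → γ)
    (hQ : IsPacking s Q)
    (hPtypes : ∀ b : β, (∃ i, P i = b) →
      BinHasType s P b 1 1 0 ∨ BinHasType s P b 1 0 1 ∨ BinHasType s P b 1 0 0 ∨
      BinHasType s P b 0 2 1 ∨ BinHasType s P b 0 2 0 ∨
      BinHasType s P b 0 0 3)
    (hQtypes : ∀ b : γ, (∃ i, Q i = b) →
      BinHasType s Q b 1 1 0 ∨ BinHasType s Q b 1 0 1 ∨ BinHasType s Q b 1 0 0 ∨
      BinHasType s Q b 0 2 1 ∨ BinHasType s Q b 0 2 0 ∨ BinHasType s Q b 0 1 2 ∨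
      BinHasType s Q b 0 0 3)
    (hBSthorough : ∀ bi xi : ι, isB s bi → isS s xi → s bi + s xi ≤ 1 →
      (BinHasType s P (P bi) 1 1 0 ∨ BinHasType s P (P bi) 1 0 1) ∨
      (BinHasType s P (P xi) 1 1 0 ∨ BinHasType s P (P xi) 1 0 1))
    (hQnormBS : ∀ i, isB s i → BinHasType s P (P i) 1 1 0 →
      ¬ BinHasType s Q (Q i) 1 0 1)
    (hQnormB : ∀ i, isB s i → BinHasType s P (P i) 1 1 0 →
      ¬ BinHasType s Q (Q i) 1 0 0) :
    (numBins s P 1 0 1 : ℤ) + numBins s P 0 2 0 + 2 * numBins s Q 0 1 2 ≥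
      3 * ((numBins s P 0 0 3 : ℤ) - numBins s Q 0 0 3) := by
  have hPcover : ∀ i, ∃ t ∈ ({(1, 1, 0), (1, 0, 1), (1, 0, 0), (0, 2, 1), (0, 2, 0), (0, 0, 3)} :
      Finset (ℕ × ℕ × ℕ)), BinHasType s P (P i) t.1 t.2.1 t.2.2 :=
    fun i => by simpa using hPtypes (P i) ⟨i, rfl⟩
  have hQcover : ∀ i, ∃ t ∈ ({(1, 1, 0), (1, 0, 1), (1, 0, 0), (0, 2, 1), (0, 2, 0), (0, 1, 2),
      (0, 0, 3)} : Finset (ℕ × ℕ × ℕ)), BinHasType s Q (Q i) t.1 t.2.1 t.2.2 :=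
    fun i => by simpa using hQtypes (Q i) ⟨i, rfl⟩
  have hSP := card_filter_eq_sum_mul_numBins s P (isS s) _ (·.2.2) hPcover fun _ _ _ h => h.2.2.1
  have hSQ := card_filter_eq_sum_mul_numBins s Q (isS s) _ (·.2.2) hQcover fun _ _ _ h => h.2.2.1
  have hLP := card_filter_eq_sum_mul_numBins s P (isL s) _ (·.2.1) hPcover fun _ _ _ h => h.2.1
  have hLQ := card_filter_eq_sum_mul_numBins s Q (isL s) _ (·.2.1) hQcover fun _ _ _ h => h.2.1
  simp at hSP hSQ hLP hLQ
  have hBL := numBins_BL_le hQtypes hQnormBS hQnormB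
  have hBS := numBins_BS_le hQ hBSthorough hQnormBS
  omega

/-- Lemma 8/9 of the paper (`N_P(BS) + N_P(LL) + 2 N_Q(LSS) ≥ 3 (N_P(SSS) - N_Q(SSS))`). -/
theorem boundS {ι β γ : Type*} [Fintype ι] [DecidableEq β] [DecidableEq γ]
    (s : ι → ℝ) (hs : ∀ i, 1 / 4 < s i ∧ s i ≤ 1)
    (P : ι → β) (Q : ι → γ)
    (hP : IsPacking s P) (hQ : IsPacking s Q)
    (hPtypes : ∀ b : β, (∃ i, P i = b) →
      BinHasType s P b 1 1 0 ∨ BinHasType s P b 1 0 1 ∨ BinHasType s P b 1 0 0 ∨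
      BinHasType s P b 0 2 1 ∨ BinHasType s P b 0 2 0 ∨
      BinHasType s P b 0 0 3)
    (hQtypes : ∀ b : γ, (∃ i, Q i = b) →
      BinHasType s Q b 1 1 0 ∨ BinHasType s Q b 1 0 1 ∨ BinHasType s Q b 1 0 0 ∨
      BinHasType s Q b 0 2 1 ∨ BinHasType s Q b 0 2 0 ∨ BinHasType s Q b 0 1 2 ∨
      BinHasType s Q b 0 0 3)
    (hBLthorough : ∀ bi li : ι, isB s bi → isL s li → s bi + s li ≤ 1 →
      BinHasType s P (P bi) 1 1 0 ∨ BinHasType s P (P li) 1 1 0)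
    (hBSthorough : ∀ bi xi : ι, isB s bi → isS s xi → s bi + s xi ≤ 1 →
      (BinHasType s P (P bi) 1 1 0 ∨ BinHasType s P (P bi) 1 0 1) ∨
      (BinHasType s P (P xi) 1 1 0 ∨ BinHasType s P (P xi) 1 0 1))
    (hLLSthorough : ¬ ∃ b1 b2 : β, b1 ≠ b2 ∧
      (BinHasType s P b1 0 2 0 ∨ BinHasType s P b1 0 0 3) ∧
      (BinHasType s P b2 0 2 0 ∨ BinHasType s P b2 0 0 3) ∧
      ∃ l1 l2 x : ι, l1 ≠ l2 ∧ isL s l1 ∧ isL s l2 ∧ isS s x ∧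
        (P l1 = b1 ∨ P l1 = b2) ∧ (P l2 = b1 ∨ P l2 = b2) ∧ (P x = b1 ∨ P x = b2) ∧
        s l1 + s l2 + s x ≤ 1)
    (hQnormBS : ∀ i, isB s i → BinHasType s P (P i) 1 1 0 →
      ¬ BinHasType s Q (Q i) 1 0 1)
    (hQnormB : ∀ i, isB s i → BinHasType s P (P i) 1 1 0 →
      ¬ BinHasType s Q (Q i) 1 0 0) :
    (numBins s P 1 0 1 : ℤ) + numBins s P 0 2 0 + 2 * numBins s Q 0 1 2 ≥
      3 * ((numBins s P 0 0 3 : ℤ) - numBins s Q 0 0 3) :=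
  boundS_general s P Q hQ hPtypes hQtypes hBSthorough hQnormBS hQnormB
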